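/- Let L/K be a cyclic Galois extension of degree n with Galois group generated by σ, and for 1 ≤ i ≤ n set B_i = {f_{b,σ^i} : b ∈ L} ⊆ Bil(L), where f_{b,σ^i}(x,y) = Tr^L_K(bσ^i(x)y). Then for any integer k with 1 ≤ k ≤ n, every nonzero element of the nk-dimensional subspace B₁ ⊕ ⋯ ⊕ B_k of Bil(L) has rank at least n − k + 1. -/

import Mathlib

open Module LinearMap Finset

section Aux
variable {K L : Type*} [Field K] [Field L] [Algebra K L]

lemma aux_fix_zpow (σ : L ≃ₐ[K] L) {x : L} (hx : σ x = x) (m : ℤ) : (σ ^ m) x = x := by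
  have hpow : ∀ j : ℕ, (σ ^ j) x = x := by
    intro j; induction j with
    | zero => simp
    | succ j ih => rw [pow_succ, AlgEquiv.mul_apply, hx, ih]
  cases m with
  | ofNat j => simpa using hpow j
  | negSucc j =>
    have h1 := hpow (j + 1)
    have h2 : (σ ^ (j + 1))⁻¹ x = x := by
      conv_lhs => rw [← h1]
      rw [← AlgEquiv.mul_apply, inv_mul_cancel, AlgEquiv.one_apply]
    simpa [zpow_negSucc] using h2

lemma aux_ker_sub_one [FiniteDimensional K L] [IsGalois K L] (σ : L ≃ₐ[K] L)
    (hgen : ∀ τ : L ≃ₐ[K] L, τ ∈ Subgroup.zpowers σ) :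
    finrank K ↥(ker (σ.toLinearMap - (LinearMap.id : L →ₗ[K] L))) ≤ 1 := by
  have hbot : IntermediateField.fixedField (⊤ : Subgroup (L ≃ₐ[K] L)) = ⊥ :=
    ((IsGalois.tfae (F := K) (E := L)).out 0 1 rfl rfl).mp inferInstance
  have hle : (ker (σ.toLinearMap - (LinearMap.id : L →ₗ[K] L))) ≤
      Subalgebra.toSubmodule (⊥ : IntermediateField K L).toSubalgebra := by
    intro x hx
    have hσx : σ x = x := by
      have := hx
      simp only [LinearMap.mem_ker, LinearMap.sub_apply, LinearMap.id_apply,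
        AlgEquiv.toLinearMap_apply, sub_eq_zero] at this
      exact this
    have hfix : x ∈ IntermediateField.fixedField (⊤ : Subgroup (L ≃ₐ[K] L)) := by
      intro m
      obtain ⟨j, hj⟩ := hgen (m : L ≃ₐ[K] L)
      show (m : L ≃ₐ[K] L) • x = x
      rw [AlgEquiv.smul_def, ← hj]
      exact aux_fix_zpow σ hσx j
    rw [hbot] at hfix
    exact hfix
  calc finrank K ↥(ker (σ.toLinearMap - (LinearMap.id : L →ₗ[K] L)))
      ≤ finrank K (Subalgebra.toSubmodule (⊥ : IntermediateField K L).toSubalgebra) :=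
        Submodule.finrank_mono hle
    _ = 1 := IntermediateField.finrank_bot

lemma aux_finrank_ker_comp [FiniteDimensional K L] (f g : L →ₗ[K] L) :
    finrank K (ker (g ∘ₗ f)) ≤ finrank K (ker f) + finrank K (ker g) := by
  set W : Submodule K L := ker (g ∘ₗ f) with hW
  have hmap : ∀ x : W, (f.domRestrict W) x ∈ ker g := by
    intro x
    have hx := LinearMap.mem_ker.mp x.2
    rw [LinearMap.comp_apply] at hx
    exact LinearMap.mem_ker.mpr (by simpa using hx)
  let φ : W →ₗ[K] ker g := (f.domRestrict W).codRestrict (ker g) hmap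
  have h1 : finrank K (range φ) + finrank K (ker φ) = finrank K W :=
    φ.finrank_range_add_finrank_ker
  have h2 : finrank K (range φ) ≤ finrank K (ker g) := Submodule.finrank_le _
  have h3 : finrank K (ker φ) ≤ finrank K (ker f) := by
    have hmem : ∀ c : ker φ, (W.subtype ∘ₗ (ker φ).subtype) c ∈ ker f := by
      intro c
      have hc : φ (c : W) = 0 := c.2
      have hval : f (((c : W) : L)) = 0 := by
        have h := congrArg Subtype.val hc
        rw [show ((φ (c : W) : ↥(ker g)) : L) = f ((c : W) : L) from rfl] at h
        simpa using h
      exact LinearMap.mem_ker.mpr (by simpa using hval)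
    have hψ : Function.Injective
        ((W.subtype ∘ₗ (ker φ).subtype).codRestrict (ker f) hmem) := by
      intro a b hab
      have := congrArg Subtype.val hab
      simp only [LinearMap.codRestrict_apply, LinearMap.comp_apply,
        Submodule.subtype_apply] at this
      exact Subtype.ext (Subtype.ext this)
    exact LinearMap.finrank_le_finrank_of_injective hψ
  omega

end Aux

section Poly
variable {K L : Type*} [Field K] [Field L] [Algebra K L]

lemma aux_ker_poly_le [FiniteDimensional K L] [IsGalois K L] (σ : L ≃ₐ[K] L)
    (hgen : ∀ τ : L ≃ₐ[K] L, τ ∈ Subgroup.zpowers σ) :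
    ∀ m : ℕ, ∀ c : ℕ → L,
      (∑ i ∈ Finset.range m, c i • ((σ ^ i).toLinearMap : L →ₗ[K] L)) ≠ 0 →
      finrank K ↥(ker (∑ i ∈ Finset.range m, c i • ((σ ^ i).toLinearMap : L →ₗ[K] L))) + 1 ≤ m := by
  intro m
  induction m with
  | zero => intro c hc; simp at hc
  | succ m ih =>
    intro c hc
    set T : L →ₗ[K] L := ∑ i ∈ Finset.range (m+1), c i • ((σ ^ i).toLinearMap : L →ₗ[K] L)
      with hT
    by_cases hker : ker T = ⊥
    · rw [hker]
      simp
    · -- pick nonzero v in the kernel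
      obtain ⟨v, hvT, hv0⟩ : ∃ v, T v = 0 ∧ v ≠ 0 := by
        rcases Submodule.exists_mem_ne_zero_of_ne_bot hker with ⟨v, hv, hv0⟩
        exact ⟨v, LinearMap.mem_ker.mp hv, hv0⟩
      have hTapp : ∀ x, T x = ∑ i ∈ Finset.range (m+1), c i * (σ ^ i) x := by
        intro x
        rw [hT]
        simp [LinearMap.sum_apply, smul_eq_mul]
      set c' : ℕ → L := fun i => c i * (σ ^ i) v with hc'
      set g : L →ₗ[K] L := ∑ i ∈ Finset.range (m+1), c' i • ((σ ^ i).toLinearMap : L →ₗ[K] L)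
        with hg
      have hgapp : ∀ x, g x = T (v * x) := by
        intro x
        rw [hg, hTapp]
        simp only [LinearMap.sum_apply, LinearMap.smul_apply, AlgEquiv.toLinearMap_apply,
          smul_eq_mul, map_mul, hc']
        exact Finset.sum_congr rfl fun i _ => by ring
      have hg1 : g 1 = ∑ i ∈ Finset.range (m+1), c' i := by
        rw [hg]
        simp only [LinearMap.sum_apply, LinearMap.smul_apply, AlgEquiv.toLinearMap_apply,
          smul_eq_mul, map_one, mul_one]
      have hsum0 : ∑ i ∈ Finset.range (m+1), c' i = 0 := by
        rw [← hg1, hgapp 1, mul_one, hvT]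
      set Q : ℕ → L := fun j => ∑ i ∈ Finset.Ico j (m+1), c' i with hQ
      have hQ0 : Q 0 = 0 := by
        rw [show Q 0 = ∑ i ∈ Finset.Ico 0 (m+1), c' i from rfl, ← Finset.range_eq_Ico]
        exact hsum0
      have hQtop : Q (m+1) = 0 := by
        rw [show Q (m+1) = ∑ i ∈ Finset.Ico (m+1) (m+1), c' i from rfl, Finset.Ico_self,
          Finset.sum_empty]
      have hQstep : ∀ i, i < m+1 → Q i = c' i + Q (i+1) := by
        intro i hi
        exact Finset.sum_eq_sum_Ico_succ_bot hi _
      set h : L →ₗ[K] L := ∑ j ∈ Finset.range m, Q (j+1) • ((σ ^ j).toLinearMap : L →ₗ[K] L)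
        with hh
      set D : L →ₗ[K] L := σ.toLinearMap - LinearMap.id with hD
      have hfact : h ∘ₗ D = g := by
        ext x
        have hσpow : ∀ j : ℕ, (σ ^ j) (σ x) = (σ ^ (j+1)) x := fun j => by
          rw [pow_succ, AlgEquiv.mul_apply]
        have hL : (h ∘ₗ D) x = (∑ j ∈ Finset.range m, Q (j+1) * (σ ^ (j+1)) x)
            - ∑ j ∈ Finset.range m, Q (j+1) * (σ ^ j) x := by
          rw [LinearMap.comp_apply, hh, hD]
          simp only [LinearMap.sum_apply, LinearMap.smul_apply, AlgEquiv.toLinearMap_apply,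
            LinearMap.sub_apply, LinearMap.id_apply, smul_eq_mul, map_sub, mul_sub,
            Finset.sum_sub_distrib]
          congr 1
          all_goals exact Finset.sum_congr rfl fun j _ => by rw [hσpow]
        have hR : g x = (∑ j ∈ Finset.range (m+1), Q j * (σ ^ j) x)
            - ∑ j ∈ Finset.range (m+1), Q (j+1) * (σ ^ j) x := by
          rw [hg]
          simp only [LinearMap.sum_apply, LinearMap.smul_apply, AlgEquiv.toLinearMap_apply,
            smul_eq_mul]
          rw [← Finset.sum_sub_distrib]
          exact Finset.sum_congr rfl fun i hi => by
            rw [hQstep i (Finset.mem_range.mp hi)]; ring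
        rw [hL, hR, Finset.sum_range_succ' (fun j => Q j * (σ ^ j) x) m,
          Finset.sum_range_succ (fun j => Q (j+1) * (σ ^ j) x) m, hQ0, hQtop]
        ring
      -- g ≠ 0
      have hgne : g ≠ 0 := by
        intro hg0
        apply hc
        ext y
        have := hgapp (v⁻¹ * y)
        rw [hg0] at this
        simp only [LinearMap.zero_apply] at this ⊢
        rw [← mul_assoc, mul_inv_cancel₀ hv0, one_mul] at this
        exact this.symm
      have hhne : h ≠ 0 := by
        intro hh0
        apply hgne
        rw [← hfact, hh0]
        simp
      have hih : finrank K ↥(ker h) + 1 ≤ m := ih (fun j => Q (j+1)) hhne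
      have hcomp : finrank K ↥(ker g) ≤ finrank K ↥(ker D) + finrank K ↥(ker h) := by
        rw [← hfact]
        exact aux_finrank_ker_comp D h
      have hD1 : finrank K ↥(ker D) ≤ 1 := aux_ker_sub_one σ hgen
      -- finrank ker T = finrank ker g
      have hkereq : finrank K ↥(ker T) = finrank K ↥(ker g) := by
        have hMv : g = T ∘ₗ LinearMap.mulLeft K v := by
          ext x
          rw [LinearMap.comp_apply, LinearMap.mulLeft_apply, hgapp]
        have hsurj : range (LinearMap.mulLeft K v) = ⊤ := by
          rw [LinearMap.range_eq_top]
          intro y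
          exact ⟨v⁻¹ * y, by rw [LinearMap.mulLeft_apply, ← mul_assoc,
            mul_inv_cancel₀ hv0, one_mul]⟩
        have hrange : range g = range T := by
          rw [hMv, LinearMap.range_comp_of_range_eq_top _ hsurj]
        have e1 := T.finrank_range_add_finrank_ker
        have e2 := g.finrank_range_add_finrank_ker
        rw [hrange] at e2
        omega
      omega
end Poly

variable {K L : Type*} [Field K] [Field L] [Algebra K L]

/-- The bilinear form `f_{b,σ}(x,y) = Tr^L_K (b * σ x * y)`. -/
noncomputable def galoisBilForm (b : L) (σ : L ≃ₐ[K] L) : (L →ₗ[K] L →ₗ[K] K) :=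
  LinearMap.mk₂ K (fun x y => Algebra.trace K L (b * σ x * y))
    (fun x x' y => by
      try dsimp only
      rw [show b * σ (x + x') * y = b * σ x * y + b * σ x' * y by
          rw [map_add σ]; ring, map_add])
    (fun a x y => by
      try dsimp only
      rw [show b * σ (a • x) * y = a • (b * σ x * y) by
          rw [map_smul σ]; simp only [smul_mul_assoc, mul_smul_comm], map_smul])
    (fun x y y' => by
      try dsimp only
      rw [show b * σ x * (y + y') = b * σ x * y + b * σ x * y' by ring, map_add])
    (fun a x y => by
      try dsimp only
      rw [show b * σ x * (a • y) = a • (b * σ x * y) by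
          simp only [smul_mul_assoc, mul_smul_comm], map_smul])

/-- `b ↦ f_{b,σ}` as a `K`-linear map. -/
noncomputable def galoisBilFormL (σ : L ≃ₐ[K] L) : L →ₗ[K] (L →ₗ[K] L →ₗ[K] K) where
  toFun b := galoisBilForm b σ
  map_add' b b' := by
    ext x y
    simp only [galoisBilForm, LinearMap.mk₂_apply, LinearMap.add_apply]
    rw [← map_add]; ring_nf
  map_smul' a b := by
    ext x y
    simp only [galoisBilForm, LinearMap.mk₂_apply, LinearMap.smul_apply, RingHom.id_apply]
    rw [← map_smul]; simp only [smul_mul_assoc]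

/-- The rank of a bilinear form on `L`: `dim_K L` minus the dimension of its radical
`{x : L | ∀ y, f x y = 0}` (which is the kernel of `f` viewed as a map `L →ₗ[K] (L →ₗ[K] K)`). -/
noncomputable def formRank (f : (L →ₗ[K] L →ₗ[K] K)) : ℕ :=
  Module.finrank K L - Module.finrank K (LinearMap.ker f)

/-- for a cyclic extension of degree `n` with Galois group generated by
`σ`, and `Bᵢ = {f_{b,σⁱ} : b ∈ L}` (where `f_{b,τ}(x,y) = Tr(bτ(x)y)`), for `1 ≤ k ≤ n`
the subspace `B₁ ⊕ ⋯ ⊕ B_k` has dimension `nk` and all its nonzero elements have rank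
at least `n − k + 1`. -/
theorem statement19 [FiniteDimensional K L] [IsGalois K L]
    (n : ℕ) (hn : Module.finrank K L = n)
    (σ : L ≃ₐ[K] L) (hgen : ∀ τ : L ≃ₐ[K] L, τ ∈ Subgroup.zpowers σ)
    (k : ℕ) (hk1 : 1 ≤ k) (hkn : k ≤ n) :
    Module.finrank K
        ↥(⨆ i : Fin k, LinearMap.range (galoisBilFormL (σ ^ ((i : ℕ) + 1)))) = n * k ∧
    ∀ f ∈ (⨆ i : Fin k, LinearMap.range (galoisBilFormL (σ ^ ((i : ℕ) + 1)))),
      f ≠ 0 → n - k + 1 ≤ formRank f := by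
  classical
  have hnd := traceForm_nondegenerate K L
  have hn1 : 1 ≤ n := by
    rw [← hn]; exact Module.finrank_pos
  have horder : orderOf σ = n := by
    rw [orderOf_eq_card_of_forall_mem_zpowers hgen,
      IsGalois.card_aut_eq_finrank, hn]
  have hinj : Function.Injective (fun i : Fin k => σ ^ ((i : ℕ) + 1)) := by
    intro i j hij
    have hmod := pow_eq_pow_iff_modEq.mp hij
    rw [horder] at hmod
    have hmod2 : (i : ℕ) % n = (j : ℕ) % n := Nat.ModEq.add_right_cancel' 1 hmod
    rw [Nat.mod_eq_of_lt (lt_of_lt_of_le i.2 hkn),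
      Nat.mod_eq_of_lt (lt_of_lt_of_le j.2 hkn)] at hmod2
    exact Fin.ext hmod2
  set Φ : (Fin k → L) →ₗ[K] (L →ₗ[K] L →ₗ[K] K) :=
    ∑ i : Fin k, (galoisBilFormL (σ ^ ((i : ℕ) + 1))) ∘ₗ (LinearMap.proj i) with hΦ
  have happly : ∀ (b : Fin k → L) (x y : L),
      Φ b x y = Algebra.trace K L ((∑ i : Fin k, b i * (σ ^ ((i:ℕ)+1)) x) * y) := by
    intro b x y
    rw [hΦ]
    simp only [LinearMap.sum_apply, LinearMap.comp_apply, LinearMap.proj_apply,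
      galoisBilFormL, LinearMap.coe_mk, AddHom.coe_mk, galoisBilForm, LinearMap.mk₂_apply]
    rw [← map_sum, Finset.sum_mul]
    all_goals congr 1
    all_goals exact Finset.sum_congr rfl fun i _ => by ring
  have hT0 : ∀ b : Fin k → L, (∀ x, ∑ i : Fin k, b i * (σ ^ ((i:ℕ)+1)) x = 0) → b = 0 := by
    intro b hb
    have hcinj : Function.Injective
        (fun i : Fin k => ((σ ^ ((i : ℕ) + 1) : L ≃ₐ[K] L) : L →* L)) := by
      intro i j hij
      apply hinj
      exact AlgEquiv.ext fun x => DFunLike.congr_fun hij x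
    have li := (linearIndependent_monoidHom L L).comp
      (fun i : Fin k => ((σ ^ ((i : ℕ) + 1) : L ≃ₐ[K] L) : L →* L)) hcinj
    have hz : ∑ i : Fin k,
        b i • (((σ ^ ((i : ℕ) + 1) : L ≃ₐ[K] L) : L →* L) : L → L) = 0 := by
      funext x
      simp only [Finset.sum_apply, Pi.smul_apply, smul_eq_mul, Pi.zero_apply]
      simpa using hb x
    have := Fintype.linearIndependent_iff.mp li b hz
    funext i
    exact this i
  have hΦinj : Function.Injective Φ := by
    refine (injective_iff_map_eq_zero Φ).mpr ?_; rw [← LinearMap.ker_eq_bot', Submodule.eq_bot_iff]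
    intro b hb
    rw [LinearMap.mem_ker] at hb
    apply hT0
    intro x
    apply hnd.1
    intro y
    rw [Algebra.traceForm_apply, ← happly, hb]
    rfl
  have hsup : (⨆ i : Fin k, LinearMap.range (galoisBilFormL (σ ^ ((i : ℕ) + 1))))
      = LinearMap.range Φ := by
    apply le_antisymm
    · apply iSup_le
      intro i
      rintro f ⟨b, rfl⟩
      refine ⟨Pi.single i b, ?_⟩
      rw [hΦ]
      simp only [LinearMap.sum_apply, LinearMap.comp_apply, LinearMap.proj_apply]
      rw [Finset.sum_eq_single i (fun j _ hj => by rw [Pi.single_eq_of_ne hj, map_zero])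
        (fun h => absurd (Finset.mem_univ i) h)]
      rw [Pi.single_eq_same]
    · rintro f ⟨b, rfl⟩
      rw [hΦ]
      simp only [LinearMap.sum_apply, LinearMap.comp_apply, LinearMap.proj_apply]
      exact Submodule.sum_mem _ fun i _ =>
        Submodule.mem_iSup_of_mem i ⟨b i, rfl⟩
  have hdim : Module.finrank K ↥(LinearMap.range Φ) = n * k := by
    rw [LinearMap.finrank_range_of_inj hΦinj, Module.finrank_pi_fintype]
    simp [hn, Finset.sum_const, Finset.card_univ, mul_comm]
  refine ⟨by rw [hsup]; exact hdim, ?_⟩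
  intro f hf hf0
  rw [hsup] at hf
  obtain ⟨b, rfl⟩ := hf
  set T : L →ₗ[K] L := ∑ i : Fin k, b i • (((σ ^ ((i:ℕ)+1)).toLinearMap) : L →ₗ[K] L) with hT
  have hTapp : ∀ x, T x = ∑ i : Fin k, b i * (σ ^ ((i:ℕ)+1)) x := by
    intro x; rw [hT]
    simp only [LinearMap.sum_apply, LinearMap.smul_apply, AlgEquiv.toLinearMap_apply,
      smul_eq_mul]
  have hfxy : ∀ x y, Φ b x y = Algebra.trace K L (T x * y) := by
    intro x y; rw [happly, hTapp]
  have hkerT : LinearMap.ker (Φ b) = LinearMap.ker T := by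
    ext x
    simp only [LinearMap.mem_ker]
    constructor
    · intro hx
      apply hnd.1
      intro y
      rw [Algebra.traceForm_apply, ← hfxy, hx]
      rfl
    · intro hx
      ext y
      have := hfxy x y
      rw [hx, zero_mul, map_zero] at this
      simpa using this
  set b' : ℕ → L := fun j => if h : j < k then b ⟨j, h⟩ else 0 with hb'
  set S : L →ₗ[K] L := ∑ i ∈ Finset.range k, b' i • (((σ ^ i).toLinearMap) : L →ₗ[K] L)
    with hS
  have hTS : T = S ∘ₗ σ.toLinearMap := by
    ext x
    rw [LinearMap.comp_apply, hT, hS]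
    simp only [LinearMap.sum_apply, LinearMap.smul_apply, AlgEquiv.toLinearMap_apply,
      smul_eq_mul]
    rw [← Fin.sum_univ_eq_sum_range (fun j => b' j * (σ ^ j) (σ x)) k]
    refine Finset.sum_congr rfl fun i _ => ?_
    rw [hb']
    simp only [dif_pos i.2, Fin.eta]
    rw [← AlgEquiv.mul_apply, ← pow_succ]
  have hS0 : S ≠ 0 := by
    intro h0
    apply hf0
    have hT00 : T = 0 := by rw [hTS, h0]; simp
    ext x y
    rw [hfxy, hT00]
    simp
  have hSbound : Module.finrank K ↥(LinearMap.ker S) + 1 ≤ k := by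
    have := aux_ker_poly_le σ hgen k b' (by rw [← hS]; exact hS0)
    rwa [← hS] at this
  have hkeq : Module.finrank K ↥(LinearMap.ker T) = Module.finrank K ↥(LinearMap.ker S) := by
    have hsurj : LinearMap.range (σ.toLinearMap : L →ₗ[K] L) = ⊤ :=
      LinearMap.range_eq_top.mpr σ.surjective
    have hrange : LinearMap.range T = LinearMap.range S := by
      rw [hTS, LinearMap.range_comp_of_range_eq_top _ hsurj]
    have e1 := T.finrank_range_add_finrank_ker
    have e2 := S.finrank_range_add_finrank_ker
    rw [hrange] at e1
    omega
  rw [formRank, hn, hkerT, hkeq]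
  omega
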